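/- arXiv:2002.06327 — 3 statements merged into one kernel-verified Lean document; each statement's English description precedes it below -/
import Mathlib

section
/- Let T* > 0, and let w : [0,1] × ℝ × [0,T*) → ℝ be a C² function (smooth in η, ξ, t) satisfying the degenerate parabolic equation -∂ₜw - η ∂_ξ w + w² ∂²_{ηη} w = 0 on (0,1) × ℝ × (0,T*), with ∂_η w = 0 at η = 0 and w = 0 at η = 1. Assume there exists C > 0 such that w(η,ξ,t) ≤ C(1-η) on the parabolic boundary set {t=0} ∪ {η=1} and in the limit |ξ| → ∞ (uniformly). Then w(η,ξ,t) ≤ C(1-η) for all (η,ξ,t) ∈ [0,1] × ℝ × [0,T*). -/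
/-!
Fix `0 < ε < C / 2` and put `ψ(η) = (ε + C)(1 - η) - ε(1 - η)³`. Then `f = w - ψ` satisfies
`L f = 6 ε w² (1 - η) > 0` wherever `f > 0` (there `w > ψ ≥ 0`), `∂_η f(0) = C - 2ε > 0`, and
`f ≤ 0` at `t = 0`, at `η = 1` and as `|ξ| → ∞`. A positive maximum of `f` over a large box
`[0, 1] × [-R, R] × [0, t₁]` therefore has `η ∈ (0, 1)`, `|ξ| < R` and `t > 0`, where
`∂ₜ f ≥ 0`, `∂_ξ f = 0` and `∂²_η f ≤ 0` force `L f ≤ 0`. Hence `w ≤ ψ ≤ C(1 - η) + ε`.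
-/

open Set Topology Function

theorem IsMaxOn.deriv_nonneg_of_Icc_right {f : ℝ → ℝ} {a b : ℝ} (h : IsMaxOn f (Icc a b) b)
    (hab : a < b) (hf : DifferentiableAt ℝ f b) : 0 ≤ deriv f b := by
  have := h.localize.hasFDerivWithinAt_nonpos hf.hasDerivAt.hasFDerivAt.hasFDerivWithinAt
    (sub_mem_posTangentConeAt_of_segment_subset (segment_symm ℝ a b ▸ segment_subset_Icc hab.le))
  simp only [ContinuousLinearMap.toSpanSingleton_apply, smul_eq_mul] at this
  exact nonneg_of_mul_nonpos_right this (sub_neg.2 hab)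

theorem IsMaxOn.deriv_nonpos_of_Icc_left {f : ℝ → ℝ} {a b : ℝ} (h : IsMaxOn f (Icc a b) a)
    (hab : a < b) (hf : DifferentiableAt ℝ f a) : deriv f a ≤ 0 := by
  have := h.localize.hasFDerivWithinAt_nonpos hf.hasDerivAt.hasFDerivAt.hasFDerivWithinAt
    (sub_mem_posTangentConeAt_of_segment_subset (segment_subset_Icc hab.le))
  simp only [ContinuousLinearMap.toSpanSingleton_apply, smul_eq_mul] at this
  exact nonpos_of_mul_nonpos_right this (sub_pos.2 hab)

theorem IsLocalMax.deriv_deriv_nonpos {f : ℝ → ℝ} {x₀ : ℝ} (h : IsLocalMax f x₀)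
    (hc : ContinuousAt f x₀) : deriv (deriv f) x₀ ≤ 0 := by
  by_contra! hpos
  have hmin := isLocalMin_of_deriv_deriv_pos hpos h.deriv_eq_zero hc
  have hconst : f =ᶠ[𝓝 x₀] fun _ => f x₀ := by
    filter_upwards [h, hmin] with x hmax hmin using le_antisymm hmax hmin
  have := hconst.deriv.deriv_eq
  simp only [deriv_const'] at this
  exact hpos.ne' this

/-- The Crocco operator with its coefficient `w²` frozen to `a`. -/
noncomputable def croccoOperator (f : ℝ → ℝ → ℝ → ℝ) (a η ξ t : ℝ) : ℝ :=
  -deriv (fun s => f η ξ s) t - η * deriv (fun x => f η x t) ξ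
    + a * deriv (deriv fun e => f e ξ t) η

section MaximumPrinciple

variable {f : ℝ → ℝ → ℝ → ℝ}

theorem croccoOperator_nonpos_of_isMaxOn (hf : Differentiable ℝ ↿f) {a R τ η₀ ξ₀ t₀ : ℝ}
    (ha : 0 ≤ a) (hmax : IsMaxOn ↿f (Icc 0 1 ×ˢ Icc (-R) R ×ˢ Icc 0 τ) (η₀, ξ₀, t₀))
    (hη₀ : η₀ ∈ Ioo 0 1) (hξ₀ : ξ₀ ∈ Ioo (-R) R) (ht₀ : t₀ ∈ Ioc 0 τ) :
    croccoOperator f a η₀ ξ₀ t₀ ≤ 0 := by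
  have hdt : 0 ≤ deriv (fun s => f η₀ ξ₀ s) t₀ :=
    (hmax.comp_mapsTo (g := fun s => (η₀, ξ₀, s))
      (fun s hs => ⟨Ioo_subset_Icc_self hη₀, Ioo_subset_Icc_self hξ₀, hs.1, hs.2.trans ht₀.2⟩)
      rfl).deriv_nonneg_of_Icc_right ht₀.1 ((hf.comp (by fun_prop)) t₀)
  have hdξ : deriv (fun x => f η₀ x t₀) ξ₀ = 0 :=
    ((hmax.comp_mapsTo (g := fun x => (η₀, x, t₀))
      (fun x hx => ⟨Ioo_subset_Icc_self hη₀, hx, Ioc_subset_Icc_self ht₀⟩)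
      rfl).isLocalMax (Icc_mem_nhds hξ₀.1 hξ₀.2)).deriv_eq_zero
  have hdη : deriv (deriv fun e => f e ξ₀ t₀) η₀ ≤ 0 :=
    ((hmax.comp_mapsTo (g := fun e => (e, ξ₀, t₀))
      (fun e he => ⟨he, Ioo_subset_Icc_self hξ₀, Ioc_subset_Icc_self ht₀⟩)
      rfl).isLocalMax (Icc_mem_nhds hη₀.1 hη₀.2)).deriv_deriv_nonpos
      ((hf.comp (by fun_prop)).continuous.continuousAt)
  rw [croccoOperator, hdξ]
  linarith [mul_nonpos_of_nonneg_of_nonpos ha hdη]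

theorem nonpos_of_croccoOperator_pos {a : ℝ → ℝ → ℝ → ℝ} {T : ℝ}
    (hf : Differentiable ℝ ↿f) (ha : ∀ η ξ t, 0 ≤ a η ξ t)
    (hsub : ∀ η ∈ Ioo (0 : ℝ) 1, ∀ ξ, ∀ t ∈ Ioo 0 T, 0 < f η ξ t →
      0 < croccoOperator f (a η ξ t) η ξ t)
    (hneu : ∀ ξ, ∀ t ∈ Ico 0 T, 0 < deriv (fun e => f e ξ t) 0)
    (hdir : ∀ ξ, ∀ t ∈ Ico 0 T, f 1 ξ t ≤ 0)
    (hinit : ∀ η ∈ Icc (0 : ℝ) 1, ∀ ξ, f η ξ 0 ≤ 0)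
    (hinf : ∀ δ > 0, ∃ R, ∀ η ∈ Icc (0 : ℝ) 1, ∀ ξ, ∀ t ∈ Ico 0 T, R ≤ |ξ| → f η ξ t ≤ δ) :
    ∀ η ∈ Icc (0 : ℝ) 1, ∀ ξ, ∀ t ∈ Ico 0 T, f η ξ t ≤ 0 := by
  intro η₁ hη₁ ξ₁ t₁ ht₁
  by_contra! hpos₁
  obtain ⟨R, hR⟩ := hinf _ (half_pos hpos₁)
  set R' := max R (|ξ₁| + 1)
  have hp₁ : (η₁, ξ₁, t₁) ∈ Icc 0 1 ×ˢ Icc (-R') R' ×ˢ Icc 0 t₁ :=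
    ⟨hη₁, abs_le.1 ((le_add_of_nonneg_right zero_le_one).trans (le_max_right _ _)),
      ht₁.1, le_rfl⟩
  obtain ⟨⟨η₀, ξ₀, t₀⟩, ⟨hη₀, hξ₀, ht₀⟩, hmax⟩ :=
    (isCompact_Icc.prod (isCompact_Icc.prod isCompact_Icc)).exists_isMaxOn ⟨_, hp₁⟩
      hf.continuous.continuousOn
  have hle : f η₁ ξ₁ t₁ ≤ f η₀ ξ₀ t₀ := hmax hp₁
  have hpos₀ : 0 < f η₀ ξ₀ t₀ := hpos₁.trans_le hle
  have hT₀ : t₀ ∈ Ico 0 T := ⟨ht₀.1, ht₀.2.trans_lt ht₁.2⟩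
  have ht₀pos : 0 < t₀ := ht₀.1.lt_of_ne' fun h => (hinit η₀ hη₀ ξ₀).not_gt (h ▸ hpos₀)
  have hη₀lt : η₀ < 1 := hη₀.2.lt_of_ne fun h => (hdir ξ₀ t₀ hT₀).not_gt (h ▸ hpos₀)
  have hη₀pos : 0 < η₀ := by
    refine hη₀.1.lt_of_ne' fun h => ?_
    subst h
    have hslice : IsMaxOn (fun e => f e ξ₀ t₀) (Icc 0 1) 0 :=
      hmax.comp_mapsTo (g := fun e => (e, ξ₀, t₀)) (fun e he => ⟨he, hξ₀, ht₀⟩) rfl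
    exact (hneu ξ₀ t₀ hT₀).not_ge
      (hslice.deriv_nonpos_of_Icc_left zero_lt_one
        ((hf.comp (by fun_prop : Differentiable ℝ fun e : ℝ => (e, ξ₀, t₀))) 0))
  have hξ₀lt : ξ₀ ∈ Ioo (-R') R' := by
    refine abs_lt.1 (lt_of_not_ge fun hξ => ?_)
    linarith [hR η₀ hη₀ ξ₀ t₀ hT₀ ((le_max_left _ _).trans hξ)]
  exact (hsub η₀ ⟨hη₀pos, hη₀lt⟩ ξ₀ t₀ ⟨ht₀pos, hT₀.2⟩ hpos₀).not_ge
    (croccoOperator_nonpos_of_isMaxOn hf (ha η₀ ξ₀ t₀) hmax ⟨hη₀pos, hη₀lt⟩ hξ₀lt ⟨ht₀pos, ht₀.2⟩)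

end MaximumPrinciple

def croccoBarrier (ε C η : ℝ) : ℝ := (ε + C) * (1 - η) - ε * (1 - η) ^ 3

section Barrier

variable {ε C η : ℝ}

theorem croccoBarrier_eq (ε C η : ℝ) :
    croccoBarrier ε C η = C * (1 - η) + ε * ((1 - η) * η * (2 - η)) := by
  rw [croccoBarrier]; ring

theorem croccoBarrier_one (ε C : ℝ) : croccoBarrier ε C 1 = 0 := by
  simp [croccoBarrier]

theorem le_croccoBarrier (hε : 0 ≤ ε) (hη : η ∈ Icc (0 : ℝ) 1) :
    C * (1 - η) ≤ croccoBarrier ε C η := by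
  have : 0 ≤ (1 - η) * η * (2 - η) :=
    mul_nonneg (mul_nonneg (sub_nonneg.2 hη.2) hη.1) (by linarith [hη.2])
  rw [croccoBarrier_eq]
  nlinarith

theorem croccoBarrier_le (hε : 0 ≤ ε) (hη : η ∈ Icc (0 : ℝ) 1) :
    croccoBarrier ε C η ≤ C * (1 - η) + ε := by
  have : (1 - η) * η * (2 - η) ≤ 1 := by nlinarith [hη.1, hη.2, sq_nonneg (1 - η)]
  rw [croccoBarrier_eq]
  nlinarith

theorem hasDerivAt_croccoBarrier (ε C η : ℝ) :
    HasDerivAt (croccoBarrier ε C) (3 * ε * (1 - η) ^ 2 - (ε + C)) η := by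
  have h : HasDerivAt (fun η : ℝ => 1 - η) (-1) η := by simpa using (hasDerivAt_id η).const_sub 1
  refine ((h.const_mul (ε + C)).sub ((h.fun_pow 3).const_mul ε)).congr_deriv ?_
  norm_num; ring

theorem deriv_croccoBarrier_zero (ε C : ℝ) : deriv (croccoBarrier ε C) 0 = 2 * ε - C := by
  rw [(hasDerivAt_croccoBarrier ε C 0).deriv]; ring

theorem differentiable_croccoBarrier (ε C : ℝ) : Differentiable ℝ (croccoBarrier ε C) :=
  fun η => (hasDerivAt_croccoBarrier ε C η).differentiableAt

theorem deriv_croccoBarrier (ε C : ℝ) :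
    deriv (croccoBarrier ε C) = fun η => 3 * ε * (1 - η) ^ 2 - (ε + C) :=
  funext fun η => (hasDerivAt_croccoBarrier ε C η).deriv

theorem hasDerivAt_deriv_croccoBarrier (ε C η : ℝ) :
    HasDerivAt (deriv (croccoBarrier ε C)) (-(6 * ε * (1 - η))) η := by
  have h : HasDerivAt (fun η : ℝ => 1 - η) (-1) η := by simpa using (hasDerivAt_id η).const_sub 1
  rw [deriv_croccoBarrier]
  refine (((h.fun_pow 2).const_mul (3 * ε)).sub_const (ε + C)).congr_deriv ?_
  norm_num; ring

theorem croccoOperator_sub_croccoBarrier {w : ℝ → ℝ → ℝ → ℝ} {a ξ t : ℝ}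
    (hw : ContDiff ℝ 2 fun e => w e ξ t) :
    croccoOperator (fun η ξ t => w η ξ t - croccoBarrier ε C η) a η ξ t
      = croccoOperator w a η ξ t + a * (6 * ε * (1 - η)) := by
  have hderiv : deriv (fun e => w e ξ t - croccoBarrier ε C e)
      = fun e => deriv (fun e => w e ξ t) e - deriv (croccoBarrier ε C) e :=
    funext fun e => deriv_fun_sub (hw.differentiable two_ne_zero e)
      (differentiable_croccoBarrier ε C e)
  rw [croccoOperator, croccoOperator, deriv_sub_const, deriv_sub_const, hderiv,
    deriv_fun_sub (hw.differentiable_deriv_two η)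
      (hasDerivAt_deriv_croccoBarrier ε C η).differentiableAt,
    (hasDerivAt_deriv_croccoBarrier ε C η).deriv]
  ring

theorem croccoOperator_sub_croccoBarrier_pos {w : ℝ → ℝ → ℝ → ℝ} {ξ t : ℝ}
    (hw : ContDiff ℝ 2 fun e => w e ξ t) (hL : croccoOperator w (w η ξ t ^ 2) η ξ t = 0)
    (hε : 0 < ε) (hη : η < 1) (hw₀ : w η ξ t ≠ 0) :
    0 < croccoOperator (fun η ξ t => w η ξ t - croccoBarrier ε C η) (w η ξ t ^ 2) η ξ t := by
  rw [croccoOperator_sub_croccoBarrier hw, hL, zero_add]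
  have := sub_pos.2 hη
  positivity

theorem le_of_forall_le_croccoBarrier {x : ℝ} (hC : 0 < C) (hη : η ∈ Icc (0 : ℝ) 1)
    (h : ∀ ε ∈ Ioo 0 (C / 2), x ≤ croccoBarrier ε C η) : x ≤ C * (1 - η) := by
  refine le_of_forall_pos_le_add fun ε hε => ?_
  have hε' : min ε (C / 4) ∈ Ioo 0 (C / 2) :=
    ⟨lt_min hε (by positivity), (min_le_right _ _).trans_lt (by linarith)⟩
  linarith [h _ hε', croccoBarrier_le (C := C) hε'.1.le hη, min_le_left ε (C / 4)]

end Barrier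

theorem crocco_upper_bound_general (Tstar C : ℝ) (hC : 0 < C)
    (w : ℝ → ℝ → ℝ → ℝ)
    (hsmooth : ContDiff ℝ 2 (fun p : ℝ × ℝ × ℝ => w p.1 p.2.1 p.2.2))
    (heq : ∀ η ∈ Set.Ioo (0:ℝ) 1, ∀ ξ : ℝ, ∀ t ∈ Set.Ioo (0:ℝ) Tstar,
      -(deriv (fun s => w η ξ s) t) - η * deriv (fun x => w η x t) ξ
        + (w η ξ t)^2 * deriv (deriv (fun e => w e ξ t)) η = 0)
    (hneu : ∀ ξ : ℝ, ∀ t ∈ Set.Ico (0:ℝ) Tstar, deriv (fun e => w e ξ t) 0 = 0)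
    (hdir : ∀ ξ : ℝ, ∀ t ∈ Set.Ico (0:ℝ) Tstar, w 1 ξ t = 0)
    (hinit : ∀ η ∈ Set.Icc (0:ℝ) 1, ∀ ξ : ℝ, w η ξ 0 ≤ C * (1 - η))
    (hinf : ∀ ε > (0:ℝ), ∃ R : ℝ, ∀ η ∈ Set.Icc (0:ℝ) 1, ∀ ξ : ℝ,
      ∀ t ∈ Set.Ico (0:ℝ) Tstar, R ≤ |ξ| → w η ξ t ≤ C * (1 - η) + ε) :
    ∀ η ∈ Set.Icc (0:ℝ) 1, ∀ ξ : ℝ, ∀ t ∈ Set.Ico (0:ℝ) Tstar,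
      w η ξ t ≤ C * (1 - η) := by
  have hslice : ∀ ξ t, ContDiff ℝ 2 fun e => w e ξ t := fun ξ t =>
    hsmooth.comp (by fun_prop : ContDiff ℝ 2 fun e : ℝ => (e, ξ, t))
  have hbarrier : ∀ ε ∈ Ioo 0 (C / 2), ∀ η ∈ Icc (0 : ℝ) 1, ∀ ξ, ∀ t ∈ Ico 0 Tstar,
      w η ξ t - croccoBarrier ε C η ≤ 0 := by
    intro ε hε
    refine nonpos_of_croccoOperator_pos (f := fun η ξ t => w η ξ t - croccoBarrier ε C η)
      (a := fun η ξ t => w η ξ t ^ 2) ((hsmooth.differentiable two_ne_zero).sub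
        ((differentiable_croccoBarrier ε C).comp differentiable_fst))
      (fun _ _ _ => sq_nonneg _) (fun η hη ξ t ht hpos => ?_) (fun ξ t ht => ?_)
      (fun ξ t ht => by simp [hdir ξ t ht, croccoBarrier_one])
      (fun η hη ξ => by linarith [hinit η hη ξ, le_croccoBarrier (C := C) hε.1.le hη])
      (fun δ hδ => ?_)
    · refine croccoOperator_sub_croccoBarrier_pos (hslice ξ t) (heq η hη ξ t ht) hε.1 hη.2
        (ne_of_gt ?_)
      linarith [le_croccoBarrier (C := C) hε.1.le (Ioo_subset_Icc_self hη),
        mul_pos hC (sub_pos.2 hη.2)]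
    · rw [deriv_fun_sub (hslice ξ t |>.differentiable two_ne_zero 0)
        (differentiable_croccoBarrier ε C 0), hneu ξ t ht, deriv_croccoBarrier_zero]
      linarith [hε.2]
    · obtain ⟨R, hR⟩ := hinf δ hδ
      exact ⟨R, fun η hη ξ t ht hξ => by
        linarith [hR η hη ξ t ht hξ, le_croccoBarrier (C := C) hε.1.le hη]⟩
  exact fun η hη ξ t ht => le_of_forall_le_croccoBarrier hC hη fun ε hε =>
    sub_nonpos.1 (hbarrier ε hε η hη ξ t ht)

theorem crocco_upper_bound (Tstar C : ℝ) (hT : 0 < Tstar) (hC : 0 < C)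
    (w : ℝ → ℝ → ℝ → ℝ)
    (hsmooth : ContDiff ℝ 2 (fun p : ℝ × ℝ × ℝ => w p.1 p.2.1 p.2.2))
    (heq : ∀ η ∈ Set.Ioo (0:ℝ) 1, ∀ ξ : ℝ, ∀ t ∈ Set.Ioo (0:ℝ) Tstar,
      -(deriv (fun s => w η ξ s) t) - η * deriv (fun x => w η x t) ξ
        + (w η ξ t)^2 * deriv (deriv (fun e => w e ξ t)) η = 0)
    (hneu : ∀ ξ : ℝ, ∀ t ∈ Set.Ico (0:ℝ) Tstar, deriv (fun e => w e ξ t) 0 = 0)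
    (hdir : ∀ ξ : ℝ, ∀ t ∈ Set.Ico (0:ℝ) Tstar, w 1 ξ t = 0)
    (hinit : ∀ η ∈ Set.Icc (0:ℝ) 1, ∀ ξ : ℝ, w η ξ 0 ≤ C * (1 - η))
    (hinf : ∀ ε > (0:ℝ), ∃ R : ℝ, ∀ η ∈ Set.Icc (0:ℝ) 1, ∀ ξ : ℝ,
      ∀ t ∈ Set.Ico (0:ℝ) Tstar, R ≤ |ξ| → w η ξ t ≤ C * (1 - η) + ε) :
    ∀ η ∈ Set.Icc (0:ℝ) 1, ∀ ξ : ℝ, ∀ t ∈ Set.Ico (0:ℝ) Tstar,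
      w η ξ t ≤ C * (1 - η) :=
  crocco_upper_bound_general Tstar C hC w hsmooth heq hneu hdir hinit hinf
end

section
/- Let u be as above (monotone in y, u(x,0)=0, c₀e^{-y} ≤ ∂ᵧu ≤ C₀e^{-y}), and in Crocco variables define w(η,ξ) = ∂ᵧu. Then ∂ₓu(x,y) = w(η,ξ) ∫₀^η (∂_ξ w)(η',ξ)/w(η',ξ)² dη' where η = u(x,y). Consequently, if |∂_ξ w| ≤ C*(1-η) and c₀(1-η) ≤ w ≤ C₀(1-η) with 1-η ≥ c₀' e^{-y}, then |∂ₓu(x,y)| ≤ C(1+y) e^{-y} for a constant C depending on c₀, C₀, C*. -/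
lemma aux_fderiv_apply_smooth {f : ℝ × ℝ → ℝ} (hf : ContDiff ℝ (⊤ : ℕ∞) f) (v : ℝ × ℝ) :
    Continuous (fun p => fderiv ℝ f p v) :=
  (((ContinuousLinearMap.apply ℝ ℝ v).contDiff (n := (⊤ : ℕ∞))).comp
    (hf.fderiv_right (m := (⊤ : ℕ∞)) (by simp))).continuous

lemma aux_hasDerivAt_fst {f : ℝ × ℝ → ℝ} (hf : ContDiff ℝ (⊤ : ℕ∞) f) (x y : ℝ) :
    HasDerivAt (fun s => f (s, y)) (fderiv ℝ f (x, y) (1, 0)) x := by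
  have h := (hf.differentiable (by simp) (x, y)).hasFDerivAt.comp_hasDerivAt x
    ((hasDerivAt_id x).prodMk (hasDerivAt_const x y))
  exact h

lemma aux_hasDerivAt_snd {f : ℝ × ℝ → ℝ} (hf : ContDiff ℝ (⊤ : ℕ∞) f) (x y : ℝ) :
    HasDerivAt (fun t => f (x, t)) (fderiv ℝ f (x, y) (0, 1)) y := by
  have h := (hf.differentiable (by simp) (x, y)).hasFDerivAt.comp_hasDerivAt y
    ((hasDerivAt_const y x).prodMk (hasDerivAt_id y))
  exact h

lemma aux_second_symm {f : ℝ × ℝ → ℝ} (hf : ContDiff ℝ (⊤ : ℕ∞) f) (p v v' : ℝ × ℝ) :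
    fderiv ℝ (fderiv ℝ f) p v v' = fderiv ℝ (fderiv ℝ f) p v' v :=
  second_derivative_symmetric (fun q => (hf.differentiable (by simp) q).hasFDerivAt)
    (((hf.fderiv_right (m := (⊤ : ℕ∞)) (by simp)).differentiable (by simp)) p).hasFDerivAt v v'

lemma aux_hasDerivAt_snd_fderiv {f : ℝ × ℝ → ℝ} (hf : ContDiff ℝ (⊤ : ℕ∞) f) (x y : ℝ) (v : ℝ × ℝ) :
    HasDerivAt (fun t => fderiv ℝ f (x, t) v)
      (fderiv ℝ (fderiv ℝ f) (x, y) (0, 1) v) y := by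
  have hg : HasFDerivAt (fun p => fderiv ℝ f p v)
      ((ContinuousLinearMap.apply ℝ ℝ v).comp (fderiv ℝ (fderiv ℝ f) (x, y))) (x, y) :=
    (ContinuousLinearMap.apply ℝ ℝ v).hasFDerivAt.comp (x, y)
      (((hf.fderiv_right (m := (⊤ : ℕ∞)) (by simp)).differentiable (by simp)) (x, y)).hasFDerivAt
  have h := hg.comp_hasDerivAt y ((hasDerivAt_const y x).prodMk (hasDerivAt_id y))
  exact h

lemma aux_hasDerivAt_fst_fderiv {f : ℝ × ℝ → ℝ} (hf : ContDiff ℝ (⊤ : ℕ∞) f) (x y : ℝ) (v : ℝ × ℝ) :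
    HasDerivAt (fun s => fderiv ℝ f (s, y) v)
      (fderiv ℝ (fderiv ℝ f) (x, y) (1, 0) v) x := by
  have hg : HasFDerivAt (fun p => fderiv ℝ f p v)
      ((ContinuousLinearMap.apply ℝ ℝ v).comp (fderiv ℝ (fderiv ℝ f) (x, y))) (x, y) :=
    (ContinuousLinearMap.apply ℝ ℝ v).hasFDerivAt.comp (x, y)
      (((hf.fderiv_right (m := (⊤ : ℕ∞)) (by simp)).differentiable (by simp)) (x, y)).hasFDerivAt
  have h := hg.comp_hasDerivAt x ((hasDerivAt_id x).prodMk (hasDerivAt_const x y))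
  exact h

lemma partA (u : ℝ → ℝ → ℝ) (w : ℝ → ℝ → ℝ)
    (c₀ c₀' : ℝ) (hc₀ : 0 < c₀) (hc₀' : 0 < c₀')
    (hu : ContDiff ℝ (⊤ : ℕ∞) (fun p : ℝ × ℝ => u p.1 p.2))
    (hwreg : ContDiff ℝ (⊤ : ℕ∞) (fun p : ℝ × ℝ => w p.1 p.2))
    (hu0 : ∀ x, u x 0 = 0)
    (hmono : ∀ x y, 0 < deriv (fun z => u x z) y)
    (hcrocco : ∀ x y, 0 ≤ y → w (u x y) x = deriv (fun z => u x z) y)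
    (hwbd : ∀ η ∈ Set.Icc (0:ℝ) 1, ∀ ξ : ℝ, c₀ * (1 - η) ≤ w η ξ)
    (hexp : ∀ x y, 0 ≤ y → c₀' * Real.exp (-y) ≤ 1 - u x y)
    (x y₀ : ℝ) (hy₀ : 0 ≤ y₀) :
    deriv (fun s => u s y₀) x
      = w (u x y₀) x * ∫ η' in (0:ℝ)..(u x y₀),
          deriv (fun s => w η' s) x / (w η' x)^2 := by
  set U : ℝ × ℝ → ℝ := fun p => u p.1 p.2 with hUdef
  set W : ℝ × ℝ → ℝ := fun p => w p.1 p.2 with hWdef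
  -- basic derivative identifications
  have hderiv_fst : ∀ s y : ℝ, deriv (fun s' => u s' y) s = fderiv ℝ U (s, y) (1, 0) :=
    fun s y => (aux_hasDerivAt_fst hu s y).deriv
  have hderiv_snd : ∀ s t : ℝ, deriv (fun z => u s z) t = fderiv ℝ U (s, t) (0, 1) :=
    fun s t => (aux_hasDerivAt_snd hu s t).deriv
  have hwsnd : ∀ η ξ : ℝ, deriv (fun s => w η s) ξ = fderiv ℝ W (η, ξ) (0, 1) :=
    fun η ξ => (aux_hasDerivAt_snd hwreg η ξ).deriv
  have hBpos : ∀ s t : ℝ, 0 < fderiv ℝ U (s, t) (0, 1) := by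
    intro s t
    have h := hmono s t
    rwa [hderiv_snd s t] at h
  have hux : ∀ t : ℝ, HasDerivAt (fun z => u x z) (fderiv ℝ U (x, t) (0, 1)) t :=
    fun t => aux_hasDerivAt_snd hu x t
  have humono : StrictMono (fun z => u x z) := strictMono_of_deriv_pos (hmono x)
  have hrange : ∀ t : ℝ, 0 ≤ t → 0 ≤ u x t ∧ u x t < 1 := by
    intro t ht
    constructor
    · have := humono.monotone ht
      simpa [hu0 x] using this
    · have h := hexp x t ht
      nlinarith [Real.exp_pos (-t)]
  set β : ℝ := u x y₀ with hβdef
  have hβ0 : 0 ≤ β := (hrange y₀ hy₀).1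
  have hβ1 : β < 1 := (hrange y₀ hy₀).2
  have hmemIcc : ∀ t ∈ Set.Icc 0 y₀, u x t ∈ Set.Icc 0 β := by
    intro t ht
    exact ⟨(hrange t ht.1).1, humono.monotone ht.2⟩
  -- the integrand
  set g : ℝ → ℝ := fun η' => deriv (fun s => w η' s) x / (w η' x) ^ 2 with hgdef
  have hwcont : Continuous fun η => w η x :=
    hwreg.continuous.comp (continuous_id.prodMk continuous_const)
  have hnumcont : Continuous fun η => deriv (fun s => w η s) x := by
    have h : (fun η => deriv (fun s => w η s) x) = fun η => fderiv ℝ W (η, x) (0, 1) :=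
      funext fun η => hwsnd η x
    rw [h]
    exact (aux_fderiv_apply_smooth hwreg (0, 1)).comp (continuous_id.prodMk continuous_const)
  set V : Set ℝ := {η : ℝ | w η x ≠ 0} with hVdef
  have hVopen : IsOpen V := isOpen_ne_fun hwcont continuous_const
  have hgV : ContinuousOn g V :=
    hnumcont.continuousOn.div ((hwcont.pow 2).continuousOn)
      (fun η hη => pow_ne_zero 2 hη)
  have hsubV : Set.Icc (0:ℝ) β ⊆ V := by
    intro η hη
    have h1 : c₀ * (1 - η) ≤ w η x := hwbd η ⟨hη.1, le_of_lt (lt_of_le_of_lt hη.2 hβ1)⟩ x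
    have : 0 < w η x := by nlinarith [hη.2]
    exact this.ne'
  have hI : ∀ η₀ ∈ Set.Icc (0:ℝ) β,
      HasDerivAt (fun η => ∫ s in (0:ℝ)..η, g s) (g η₀) η₀ := by
    intro η₀ hη₀
    have hsub : Set.uIcc (0:ℝ) η₀ ⊆ V := by
      rw [Set.uIcc_of_le hη₀.1]
      exact fun s hs => hsubV ⟨hs.1, le_trans hs.2 hη₀.2⟩
    have hint : IntervalIntegrable g MeasureTheory.volume 0 η₀ :=
      (hgV.mono hsub).intervalIntegrable
    exact intervalIntegral.integral_hasDerivAt_right hint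
      (hgV.stronglyMeasurableAtFilter hVopen _ (hsubV hη₀))
      (hgV.continuousAt (hVopen.mem_nhds (hsubV hη₀)))
  set G : ℝ → ℝ := fun t => ∫ s in (0:ℝ)..(u x t), g s with hGdef
  have hG : ∀ t ∈ Set.Icc 0 y₀,
      HasDerivAt G (g (u x t) * fderiv ℝ U (x, t) (0, 1)) t :=
    fun t ht => (hI _ (hmemIcc t ht)).comp t (hux t)
  set F : ℝ → ℝ := fun t => fderiv ℝ U (x, t) (1, 0) / fderiv ℝ U (x, t) (0, 1) with hFdef
  have hline : Continuous fun t : ℝ => ((x, t) : ℝ × ℝ) := continuous_const.prodMk continuous_id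
  have hFcont : Continuous F :=
    Continuous.div ((aux_fderiv_apply_smooth hu (1, 0)).comp hline)
      ((aux_fderiv_apply_smooth hu (0, 1)).comp hline) (fun t => (hBpos x t).ne')
  set φ : ℝ → ℝ := fun t => fderiv ℝ W (u x t, x) (0, 1) / fderiv ℝ U (x, t) (0, 1) with hφdef
  have hBw : ∀ t : ℝ, 0 ≤ t → w (u x t) x = fderiv ℝ U (x, t) (0, 1) := by
    intro t ht
    rw [hcrocco x t ht, hderiv_snd]
  have hGφ : ∀ t : ℝ, 0 ≤ t → g (u x t) * fderiv ℝ U (x, t) (0, 1) = φ t := by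
    intro t ht
    simp only [hgdef, hφdef, hwsnd]
    rw [← hBw t ht]
    have hwne : w (u x t) x ≠ 0 := by rw [hBw t ht]; exact (hBpos x t).ne'
    field_simp
  -- splitting lemma for fderiv of W
  have hsplit : ∀ (q : ℝ × ℝ) (r : ℝ),
      fderiv ℝ W q (r, 1) = r * fderiv ℝ W q (1, 0) + fderiv ℝ W q (0, 1) := by
    intro q r
    have h : ((r, 1) : ℝ × ℝ) = r • ((1, 0) : ℝ × ℝ) + ((0, 1) : ℝ × ℝ) := by
      simp [Prod.ext_iff]
    rw [h, map_add, map_smul, smul_eq_mul]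
  have hsplit0 : ∀ (q : ℝ × ℝ) (r : ℝ),
      fderiv ℝ W q (r, 0) = r * fderiv ℝ W q (1, 0) := by
    intro q r
    have h : ((r, 0) : ℝ × ℝ) = r • ((1, 0) : ℝ × ℝ) := by simp [Prod.ext_iff]
    rw [h, map_smul, smul_eq_mul]
  have hFderiv : ∀ t ∈ Set.Ico 0 y₀, HasDerivWithinAt F (φ t) (Set.Ici t) t := by
    intro t ht
    have ht0 : 0 ≤ t := ht.1
    have hA' : HasDerivAt (fun τ => fderiv ℝ U (x, τ) (1, 0))
        (fderiv ℝ (fderiv ℝ U) (x, t) (0, 1) (1, 0)) t :=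
      aux_hasDerivAt_snd_fderiv hu x t (1, 0)
    -- Crocco differentiated in x
    have h1 : HasDerivAt (fun s => ((u s t, s) : ℝ × ℝ))
        ((fderiv ℝ U (x, t) (1, 0), 1) : ℝ × ℝ) x :=
      (aux_hasDerivAt_fst hu x t).prodMk (hasDerivAt_id x)
    have hcomp0 := HasFDerivAt.comp_hasDerivAt (f := fun s => ((u s t, s) : ℝ × ℝ)) x
      (hwreg.differentiable (by simp) ((u x t, x) : ℝ × ℝ)).hasFDerivAt h1
    have hcomp : HasDerivAt (fun s => w (u s t) s)
        (fderiv ℝ W (u x t, x) (fderiv ℝ U (x, t) (1, 0), 1)) x := hcomp0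
    have hfun : (fun s => w (u s t) s) = (fun s => fderiv ℝ U (s, t) (0, 1)) :=
      funext fun s => by rw [hcrocco s t ht0, hderiv_snd]
    rw [hfun] at hcomp
    have hBx : HasDerivAt (fun s => fderiv ℝ U (s, t) (0, 1))
        (fderiv ℝ (fderiv ℝ U) (x, t) (1, 0) (0, 1)) x :=
      aux_hasDerivAt_fst_fderiv hu x t (0, 1)
    have e1 : fderiv ℝ W (u x t, x) (fderiv ℝ U (x, t) (1, 0), 1)
        = fderiv ℝ (fderiv ℝ U) (x, t) (1, 0) (0, 1) := hcomp.unique hBx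
    have e2 : fderiv ℝ (fderiv ℝ U) (x, t) (0, 1) (1, 0)
        = fderiv ℝ W (u x t, x) (fderiv ℝ U (x, t) (1, 0), 1) :=
      (aux_second_symm hu (x, t) (0, 1) (1, 0)).trans e1.symm
    -- Crocco differentiated in t (within Ici t)
    have h2 : HasDerivAt (fun τ => ((u x τ, x) : ℝ × ℝ))
        ((fderiv ℝ U (x, t) (0, 1), 0) : ℝ × ℝ) t :=
      (hux t).prodMk (hasDerivAt_const t x)
    have hh1 : HasDerivAt (fun τ => w (u x τ) x)
        (fderiv ℝ W (u x t, x) (fderiv ℝ U (x, t) (0, 1), 0)) t :=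
      HasFDerivAt.comp_hasDerivAt (f := fun τ => ((u x τ, x) : ℝ × ℝ)) t
        (hwreg.differentiable (by simp) ((u x t, x) : ℝ × ℝ)).hasFDerivAt h2
    have hBwithin : HasDerivWithinAt (fun τ => fderiv ℝ U (x, τ) (0, 1))
        (fderiv ℝ W (u x t, x) (fderiv ℝ U (x, t) (0, 1), 0)) (Set.Ici t) t := by
      refine hh1.hasDerivWithinAt.congr ?_ ?_
      · intro τ hτ
        exact (hBw τ (le_trans ht0 hτ)).symm
      · exact (hBw t ht0).symm
    have hF' : HasDerivWithinAt F
        ((fderiv ℝ (fderiv ℝ U) (x, t) (0, 1) (1, 0) * fderiv ℝ U (x, t) (0, 1)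
          - fderiv ℝ U (x, t) (1, 0) * fderiv ℝ W (u x t, x) (fderiv ℝ U (x, t) (0, 1), 0))
          / (fderiv ℝ U (x, t) (0, 1)) ^ 2) (Set.Ici t) t :=
      hA'.hasDerivWithinAt.div hBwithin (hBpos x t).ne'
    have hval : (fderiv ℝ (fderiv ℝ U) (x, t) (0, 1) (1, 0) * fderiv ℝ U (x, t) (0, 1)
          - fderiv ℝ U (x, t) (1, 0) * fderiv ℝ W (u x t, x) (fderiv ℝ U (x, t) (0, 1), 0))
          / (fderiv ℝ U (x, t) (0, 1)) ^ 2 = φ t := by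
      rw [e2, hsplit0 (u x t, x) (fderiv ℝ U (x, t) (0, 1)), hsplit, hφdef]
      have hBne : fderiv ℝ U (x, t) (0, 1) ≠ 0 := (hBpos x t).ne'
      field_simp
      ring
    rwa [hval] at hF'
  have hGderiv : ∀ t ∈ Set.Ico 0 y₀, HasDerivWithinAt G (φ t) (Set.Ici t) t := by
    intro t ht
    have h := (hG t ⟨ht.1, le_of_lt ht.2⟩).hasDerivWithinAt (s := Set.Ici t)
    rwa [hGφ t ht.1] at h
  have hGcont : ContinuousOn G (Set.Icc 0 y₀) :=
    fun t ht => (hG t ht).continuousAt.continuousWithinAt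
  have hF0 : F 0 = G 0 := by
    have hconst : HasDerivAt (fun s : ℝ => u s 0) (0 : ℝ) x :=
      (hasDerivAt_const x (0:ℝ)).congr_of_eventuallyEq
        (Filter.Eventually.of_forall fun s => hu0 s)
    have hA0 : fderiv ℝ U (x, 0) (1, 0) = 0 :=
      (aux_hasDerivAt_fst hu x 0).unique hconst
    simp [hFdef, hGdef, hA0, hu0 x]
  have hFG := eq_of_has_deriv_right_eq hFderiv hGderiv hFcont.continuousOn hGcont hF0 y₀
    ⟨hy₀, le_refl y₀⟩
  -- conclude
  rw [hderiv_fst x y₀, hBw y₀ hy₀]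
  have hBne : fderiv ℝ U (x, y₀) (0, 1) ≠ 0 := (hBpos x y₀).ne'
  have : F y₀ = G y₀ := hFG
  rw [hFdef] at this
  simp only at this
  rw [div_eq_iff hBne] at this
  rw [this]
  rw [hGdef]
  ring

lemma partB_integral_bound (w : ℝ → ℝ → ℝ) (Cstar c₀ : ℝ) (hCstar : 0 < Cstar) (hc₀ : 0 < c₀)
    (hwreg : ContDiff ℝ (⊤ : ℕ∞) (fun p : ℝ × ℝ => w p.1 p.2))
    (hwbd : ∀ η ∈ Set.Icc (0:ℝ) 1, ∀ ξ : ℝ, c₀ * (1 - η) ≤ w η ξ)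
    (hdξ : ∀ η ∈ Set.Icc (0:ℝ) 1, ∀ ξ : ℝ, |deriv (fun s => w η s) ξ| ≤ Cstar * (1 - η))
    (x η : ℝ) (hη0 : 0 ≤ η) (hη1 : η < 1) :
    |∫ s in (0:ℝ)..η, deriv (fun s' => w s s') x / (w s x) ^ 2|
      ≤ Cstar / c₀ ^ 2 * Real.log (1 / (1 - η)) := by
  set W : ℝ × ℝ → ℝ := fun p => w p.1 p.2 with hWdef
  set g : ℝ → ℝ := fun s => deriv (fun s' => w s s') x / (w s x) ^ 2 with hgdef
  have hwsnd : ∀ a ξ : ℝ, deriv (fun s => w a s) ξ = fderiv ℝ W (a, ξ) (0, 1) :=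
    fun a ξ => (aux_hasDerivAt_snd hwreg a ξ).deriv
  have hwcont : Continuous fun a => w a x :=
    hwreg.continuous.comp (continuous_id.prodMk continuous_const)
  have hnumcont : Continuous fun a => deriv (fun s => w a s) x := by
    have h : (fun a => deriv (fun s => w a s) x) = fun a => fderiv ℝ W (a, x) (0, 1) :=
      funext fun a => hwsnd a x
    rw [h]
    exact (aux_fderiv_apply_smooth hwreg (0, 1)).comp (continuous_id.prodMk continuous_const)
  have hwpos : ∀ s ∈ Set.Icc (0:ℝ) η, 0 < w s x := by
    intro s hs
    have h1 : c₀ * (1 - s) ≤ w s x := hwbd s ⟨hs.1, le_of_lt (lt_of_le_of_lt hs.2 hη1)⟩ x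
    nlinarith [lt_of_le_of_lt hs.2 hη1]
  have hgcont : ContinuousOn g (Set.Icc 0 η) :=
    hnumcont.continuousOn.div ((hwcont.pow 2).continuousOn)
      (fun s hs => pow_ne_zero 2 (hwpos s hs).ne')
  have hint : IntervalIntegrable g MeasureTheory.volume 0 η := by
    apply ContinuousOn.intervalIntegrable
    rwa [Set.uIcc_of_le hη0]
  set h : ℝ → ℝ := fun s => Cstar / c₀ ^ 2 * (1 - s)⁻¹ with hhdef
  have hhint : IntervalIntegrable h MeasureTheory.volume 0 η := by
    apply ContinuousOn.intervalIntegrable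
    rw [Set.uIcc_of_le hη0]
    refine continuousOn_const.mul ((continuousOn_const.sub continuousOn_id).inv₀ ?_)
    intro s hs
    simp only [Pi.sub_apply, id_eq]
    have h1 : s < 1 := lt_of_le_of_lt hs.2 hη1
    intro hc
    nlinarith
  have hptwise : ∀ s ∈ Set.Icc (0:ℝ) η, |g s| ≤ h s := by
    intro s hs
    have hs1 : s < 1 := lt_of_le_of_lt hs.2 hη1
    have hd : |deriv (fun s' => w s s') x| ≤ Cstar * (1 - s) :=
      hdξ s ⟨hs.1, hs1.le⟩ x
    have hwl : c₀ * (1 - s) ≤ w s x := hwbd s ⟨hs.1, hs1.le⟩ x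
    have hwp : 0 < w s x := hwpos s hs
    have habs : |g s| = |deriv (fun s' => w s s') x| / (w s x) ^ 2 := by
      rw [hgdef]
      simp only [abs_div, abs_pow, abs_of_pos hwp]
    rw [habs, hhdef]
    have hs0 : 0 < 1 - s := by linarith
    have h0 : 0 ≤ c₀ * (1 - s) := by positivity
    have hsq : c₀ ^ 2 * (1 - s) ^ 2 ≤ (w s x) ^ 2 := by
      have := mul_le_mul hwl hwl h0 hwp.le
      nlinarith [this]
    have h2 : |deriv (fun s' => w s s') x| / (w s x) ^ 2
        ≤ (Cstar * (1 - s)) / (c₀ ^ 2 * (1 - s) ^ 2) := by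
      apply div_le_div₀ (by positivity) hd (by positivity) hsq
    refine h2.trans (le_of_eq ?_)
    field_simp
  have habsint : |∫ s in (0:ℝ)..η, g s| ≤ ∫ s in (0:ℝ)..η, |g s| :=
    intervalIntegral.abs_integral_le_integral_abs hη0
  have hmono2 : (∫ s in (0:ℝ)..η, |g s|) ≤ ∫ s in (0:ℝ)..η, h s :=
    intervalIntegral.integral_mono_on hη0 hint.abs hhint hptwise
  have hcalc : (∫ s in (0:ℝ)..η, h s) = Cstar / c₀ ^ 2 * Real.log (1 / (1 - η)) := by
    rw [hhdef]
    rw [intervalIntegral.integral_const_mul]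
    congr 1
    have hc : (∫ s in (0:ℝ)..η, (1 - s)⁻¹) = ∫ t in (1 - η)..(1 - 0 : ℝ), t⁻¹ :=
      intervalIntegral.integral_comp_sub_left (fun t => t⁻¹) 1
    rw [hc]
    rw [integral_inv (by
      intro hmem
      rw [Set.uIcc_of_le (by linarith)] at hmem
      have := hmem.1
      linarith)]
    rw [sub_zero]
  calc |∫ s in (0:ℝ)..η, g s| ≤ ∫ s in (0:ℝ)..η, |g s| := habsint
    _ ≤ ∫ s in (0:ℝ)..η, h s := hmono2
    _ = Cstar / c₀ ^ 2 * Real.log (1 / (1 - η)) := hcalc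



theorem dx_u_formula_and_bound (u : ℝ → ℝ → ℝ) (w : ℝ → ℝ → ℝ)
    (Cstar c₀ C₀ c₀' : ℝ) (hCstar : 0 < Cstar) (hc₀ : 0 < c₀) (hC₀ : 0 < C₀)
    (hc₀' : 0 < c₀')
    (hu : ContDiff ℝ (⊤ : ℕ∞) (fun p : ℝ × ℝ => u p.1 p.2))
    (hwreg : ContDiff ℝ (⊤ : ℕ∞) (fun p : ℝ × ℝ => w p.1 p.2))
    (hu0 : ∀ x, u x 0 = 0)
    (hmono : ∀ x y, 0 < deriv (fun z => u x z) y)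
    (hcrocco : ∀ x y, 0 ≤ y → w (u x y) x = deriv (fun z => u x z) y)
    (hbd : ∀ x y, 0 ≤ y → c₀ * Real.exp (-y) ≤ deriv (fun z => u x z) y ∧
      deriv (fun z => u x z) y ≤ C₀ * Real.exp (-y))
    (hwbd : ∀ η ∈ Set.Icc (0:ℝ) 1, ∀ ξ : ℝ,
      c₀ * (1 - η) ≤ w η ξ ∧ w η ξ ≤ C₀ * (1 - η))
    (hdξ : ∀ η ∈ Set.Icc (0:ℝ) 1, ∀ ξ : ℝ,
      |deriv (fun s => w η s) ξ| ≤ Cstar * (1 - η))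
    (hexp : ∀ x y, 0 ≤ y → c₀' * Real.exp (-y) ≤ 1 - u x y) :
    (∀ x y, 0 ≤ y → deriv (fun s => u s y) x
      = w (u x y) x * ∫ η' in (0:ℝ)..(u x y),
          deriv (fun s => w η' s) x / (w η' x)^2) ∧
    ∃ C > (0:ℝ), ∀ x y, 0 ≤ y →
      |deriv (fun s => u s y) x| ≤ C * (1 + y) * Real.exp (-y) := by
  have hwbd' : ∀ η ∈ Set.Icc (0:ℝ) 1, ∀ ξ : ℝ, c₀ * (1 - η) ≤ w η ξ :=
    fun η hη ξ => (hwbd η hη ξ).1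
  have hformula : ∀ x y, 0 ≤ y → deriv (fun s => u s y) x
      = w (u x y) x * ∫ η' in (0:ℝ)..(u x y),
          deriv (fun s => w η' s) x / (w η' x)^2 :=
    fun x y hy => partA u w c₀ c₀' hc₀ hc₀' hu hwreg hu0 hmono hcrocco hwbd' hexp x y hy
  refine ⟨hformula, ?_⟩
  set L : ℝ := |Real.log c₀'| with hLdef
  have hL0 : 0 ≤ L := abs_nonneg _
  refine ⟨C₀ * (Cstar / c₀ ^ 2) * (1 + L), by positivity, ?_⟩
  intro x y hy
  have humono : StrictMono (fun z => u x z) := strictMono_of_deriv_pos (hmono x)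
  have hη0 : 0 ≤ u x y := by
    have := humono.monotone hy
    simpa [hu0 x] using this
  have hδ : c₀' * Real.exp (-y) ≤ 1 - u x y := hexp x y hy
  have hη1 : u x y < 1 := by nlinarith [Real.exp_pos (-y)]
  have hIbd := partB_integral_bound w Cstar c₀ hCstar hc₀ hwreg hwbd' hdξ x (u x y) hη0 hη1
  have hwval : w (u x y) x = deriv (fun z => u x z) y := hcrocco x y hy
  have hwpos : 0 < w (u x y) x := by rw [hwval]; exact hmono x y
  have hwle : w (u x y) x ≤ C₀ * Real.exp (-y) := by rw [hwval]; exact (hbd x y hy).2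
  have hδpos : 0 < 1 - u x y := by linarith
  have hlog : Real.log (1 / (1 - u x y)) ≤ y + L := by
    rw [one_div, Real.log_inv]
    have h1 : Real.log (c₀' * Real.exp (-y)) ≤ Real.log (1 - u x y) :=
      Real.log_le_log (by positivity) hδ
    rw [Real.log_mul hc₀'.ne' (Real.exp_ne_zero _), Real.log_exp] at h1
    have h2 : -|Real.log c₀'| ≤ Real.log c₀' := neg_abs_le _
    rw [hLdef]
    linarith
  rw [hformula x y hy, abs_mul, abs_of_pos hwpos]
  have hK : (0:ℝ) < Cstar / c₀ ^ 2 := by positivity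
  have step1 : w (u x y) x * |∫ η' in (0:ℝ)..(u x y),
        deriv (fun s => w η' s) x / (w η' x)^2|
      ≤ (C₀ * Real.exp (-y)) * (Cstar / c₀ ^ 2 * (y + L)) := by
    apply mul_le_mul hwle
      (hIbd.trans (mul_le_mul_of_nonneg_left hlog hK.le))
      (abs_nonneg _) (by positivity)
  refine step1.trans ?_
  have epos : (0:ℝ) < Real.exp (-y) := Real.exp_pos _
  have t1 : (0:ℝ) ≤ C₀ * (Cstar / c₀ ^ 2) * Real.exp (-y) := by positivity
  have t2 : (0:ℝ) ≤ C₀ * (Cstar / c₀ ^ 2) * Real.exp (-y) * (L * y) := by positivity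
  nlinarith [t1, t2]
end

section
/- Under the same setup (L = -∂ₜ - η̄∂_ξ̄ + w²∂²_{η̄η̄}, Lw = 0), one has the identities L(|∂_ξ̄ w|²) = -4w (∂_ξ̄ w)² ∂²_{η̄η̄}w + 2w² |∂²_{ξ̄η̄} w|² and L(|∂_η̄ w|²) = 2(∂_ξ̄ w)(∂_η̄ w) - 4w (∂_η̄ w)² ∂²_{η̄η̄}w + 2w² |∂²_{η̄η̄}w|². -/
noncomputable def Dv (v : ℝ × ℝ × ℝ) (F : ℝ × ℝ × ℝ → ℝ) : ℝ × ℝ × ℝ → ℝ :=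
  fun p => fderiv ℝ F p v

lemma contDiff_Dv {F : ℝ × ℝ × ℝ → ℝ} (hF : ContDiff ℝ (⊤ : ℕ∞) F) (v : ℝ × ℝ × ℝ) :
    ContDiff ℝ (⊤ : ℕ∞) (Dv v F) :=
  (hF.fderiv_right (by simp)).clm_apply contDiff_const

lemma hasDerivAt_c1 {F : ℝ × ℝ × ℝ → ℝ} (hF : ContDiff ℝ (⊤ : ℕ∞) F) (η ξ t : ℝ) :
    HasDerivAt (fun e => F (e, ξ, t)) (Dv (1,0,0) F (η, ξ, t)) η :=
  (hF.differentiable (by simp) (η,ξ,t)).hasFDerivAt.comp_hasDerivAt η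
    ((hasDerivAt_id η).prodMk ((hasDerivAt_const η ξ).prodMk (hasDerivAt_const η t)))

lemma hasDerivAt_c2 {F : ℝ × ℝ × ℝ → ℝ} (hF : ContDiff ℝ (⊤ : ℕ∞) F) (η ξ t : ℝ) :
    HasDerivAt (fun x => F (η, x, t)) (Dv (0,1,0) F (η, ξ, t)) ξ :=
  (hF.differentiable (by simp) (η,ξ,t)).hasFDerivAt.comp_hasDerivAt ξ
    ((hasDerivAt_const ξ η).prodMk ((hasDerivAt_id ξ).prodMk (hasDerivAt_const ξ t)))

lemma hasDerivAt_c3 {F : ℝ × ℝ × ℝ → ℝ} (hF : ContDiff ℝ (⊤ : ℕ∞) F) (η ξ t : ℝ) :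
    HasDerivAt (fun s => F (η, ξ, s)) (Dv (0,0,1) F (η, ξ, t)) t :=
  (hF.differentiable (by simp) (η,ξ,t)).hasFDerivAt.comp_hasDerivAt t
    ((hasDerivAt_const t η).prodMk ((hasDerivAt_const t ξ).prodMk (hasDerivAt_id t)))

lemma Dv_comm {F : ℝ × ℝ × ℝ → ℝ} (hF : ContDiff ℝ (⊤ : ℕ∞) F) (u v p) :
    Dv u (Dv v F) p = Dv v (Dv u F) p := by
  have hd : ∀ y, HasFDerivAt F (fderiv ℝ F y) y := fun y =>
    (hF.differentiable (by simp) y).hasFDerivAt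
  have hd2 : HasFDerivAt (fderiv ℝ F) (fderiv ℝ (fderiv ℝ F) p) p :=
    (((hF.fderiv_right (m := (⊤ : ℕ∞)) (by simp)).differentiable (by simp)) p).hasFDerivAt
  have key : ∀ a b : ℝ × ℝ × ℝ, Dv a (Dv b F) p = fderiv ℝ (fderiv ℝ F) p a b := by
    intro a b
    have h : HasFDerivAt (Dv b F)
        ((ContinuousLinearMap.apply ℝ ℝ b).comp (fderiv ℝ (fderiv ℝ F) p)) p :=
      (ContinuousLinearMap.apply ℝ ℝ b).hasFDerivAt.comp p hd2
    simp [Dv, h.fderiv]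
  rw [key, key, second_derivative_symmetric hd hd2 v u]

lemma HasDerivAt.sq'' {u : ℝ → ℝ} {u' x : ℝ} (hu : HasDerivAt u u' x) :
    HasDerivAt (fun e => (u e)^2) (2 * u x * u') x := by
  have h := hu.mul hu
  have he : (fun e => (u e)^2) = fun e => u e * u e := by funext e; ring
  rw [he]
  rw [show 2 * u x * u' = u' * u x + u x * u' by ring]; exact h

/-- The kinetic operator `L = -∂ₜ - η∂_ξ + w²∂²_{ηη}` from the Crocco-transformed
Prandtl equation, applied to a function `g` of `(η, ξ, t)`. -/
noncomputable def Lop (w g : ℝ → ℝ → ℝ → ℝ) (η ξ t : ℝ) : ℝ :=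
  -(deriv (fun s => g η ξ s) t) - η * deriv (fun x => g η x t) ξ
    + (w η ξ t)^2 * deriv (deriv (fun e => g e ξ t)) η

theorem bochner_identities (w : ℝ → ℝ → ℝ → ℝ)
    (hw : ContDiff ℝ (⊤ : ℕ∞) (fun p : ℝ × ℝ × ℝ => w p.1 p.2.1 p.2.2))
    (heq : ∀ η ξ t : ℝ, Lop w w η ξ t = 0) :
    (∀ η ξ t : ℝ,
      Lop w (fun a b c => (deriv (fun x => w a x c) b)^2) η ξ t
        = -4 * w η ξ t * (deriv (fun x => w η x t) ξ)^2
            * deriv (deriv (fun e => w e ξ t)) η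
          + 2 * (w η ξ t)^2
            * (deriv (fun e => deriv (fun x => w e x t) ξ) η)^2) ∧
    (∀ η ξ t : ℝ,
      Lop w (fun a b c => (deriv (fun e => w e b c) a)^2) η ξ t
        = 2 * deriv (fun x => w η x t) ξ * deriv (fun e => w e ξ t) η
          - 4 * w η ξ t * (deriv (fun e => w e ξ t) η)^2
              * deriv (deriv (fun e => w e ξ t)) η
          + 2 * (w η ξ t)^2 * (deriv (deriv (fun e => w e ξ t)) η)^2) := by
  set F : ℝ × ℝ × ℝ → ℝ := fun p => w p.1 p.2.1 p.2.2 with hFdef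
  have hF : ContDiff ℝ (⊤ : ℕ∞) F := hw
  have hf1 : ContDiff ℝ (⊤ : ℕ∞) (Dv (1,0,0) F) := contDiff_Dv hF _
  have hf2 : ContDiff ℝ (⊤ : ℕ∞) (Dv (0,1,0) F) := contDiff_Dv hF _
  have hf3 : ContDiff ℝ (⊤ : ℕ∞) (Dv (0,0,1) F) := contDiff_Dv hF _
  have hf11 : ContDiff ℝ (⊤ : ℕ∞) (Dv (1,0,0) (Dv (1,0,0) F)) := contDiff_Dv hf1 _
  have hf12 : ContDiff ℝ (⊤ : ℕ∞) (Dv (1,0,0) (Dv (0,1,0) F)) := contDiff_Dv hf2 _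
  -- conversion of curried derivatives to directional derivatives
  have hd1 : ∀ a b c : ℝ, deriv (fun e => w e b c) a = Dv (1,0,0) F (a,b,c) :=
    fun a b c => (hasDerivAt_c1 hF a b c).deriv
  have hd2 : ∀ a b c : ℝ, deriv (fun x => w a x c) b = Dv (0,1,0) F (a,b,c) :=
    fun a b c => (hasDerivAt_c2 hF a b c).deriv
  have hd3 : ∀ a b c : ℝ, deriv (fun s => w a b s) c = Dv (0,0,1) F (a,b,c) :=
    fun a b c => (hasDerivAt_c3 hF a b c).deriv
  have hd11 : ∀ a b c : ℝ, deriv (deriv (fun e => w e b c)) a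
      = Dv (1,0,0) (Dv (1,0,0) F) (a,b,c) := by
    intro a b c
    have h : deriv (fun e => w e b c) = fun e => Dv (1,0,0) F (e,b,c) :=
      funext fun e => hd1 e b c
    rw [h]
    exact (hasDerivAt_c1 hf1 a b c).deriv
  have hd12 : ∀ a b c : ℝ, deriv (fun e => deriv (fun x => w e x c) b) a
      = Dv (1,0,0) (Dv (0,1,0) F) (a,b,c) := by
    intro a b c
    have h : (fun e => deriv (fun x => w e x c) b) = fun e => Dv (0,1,0) F (e,b,c) :=
      funext fun e => hd2 e b c
    rw [h]
    exact (hasDerivAt_c1 hf2 a b c).deriv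
  -- the PDE in directional-derivative form
  have hE : ∀ η ξ t : ℝ, -(Dv (0,0,1) F (η,ξ,t)) - η * Dv (0,1,0) F (η,ξ,t)
      + (w η ξ t)^2 * Dv (1,0,0) (Dv (1,0,0) F) (η,ξ,t) = 0 := by
    intro η ξ t
    have h := heq η ξ t
    simp only [Lop, hd3, hd2, hd11] at h
    exact h
  -- PDE differentiated in the ξ direction
  have hE2 : ∀ η ξ t : ℝ,
      -(Dv (0,1,0) (Dv (0,0,1) F) (η,ξ,t)) - η * Dv (0,1,0) (Dv (0,1,0) F) (η,ξ,t)
        + (2 * w η ξ t * Dv (0,1,0) F (η,ξ,t) * Dv (1,0,0) (Dv (1,0,0) F) (η,ξ,t)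
          + (w η ξ t)^2 * Dv (0,1,0) (Dv (1,0,0) (Dv (1,0,0) F)) (η,ξ,t)) = 0 := by
    intro η ξ t
    have hu : HasDerivAt
        (fun x => -(Dv (0,0,1) F (η,x,t)) - η * Dv (0,1,0) F (η,x,t)
          + (w η x t)^2 * Dv (1,0,0) (Dv (1,0,0) F) (η,x,t))
        (-(Dv (0,1,0) (Dv (0,0,1) F) (η,ξ,t)) - η * Dv (0,1,0) (Dv (0,1,0) F) (η,ξ,t)
          + (2 * w η ξ t * Dv (0,1,0) F (η,ξ,t) * Dv (1,0,0) (Dv (1,0,0) F) (η,ξ,t)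
            + (w η ξ t)^2 * Dv (0,1,0) (Dv (1,0,0) (Dv (1,0,0) F)) (η,ξ,t))) ξ :=
      (((hasDerivAt_c2 hf3 η ξ t).neg).sub ((hasDerivAt_c2 hf2 η ξ t).const_mul η)).add
        (((hasDerivAt_c2 hF η ξ t).sq'').mul (hasDerivAt_c2 hf11 η ξ t))
    have hz : HasDerivAt
        (fun x => -(Dv (0,0,1) F (η,x,t)) - η * Dv (0,1,0) F (η,x,t)
          + (w η x t)^2 * Dv (1,0,0) (Dv (1,0,0) F) (η,x,t)) 0 ξ := by
      have hfun : (fun x => -(Dv (0,0,1) F (η,x,t)) - η * Dv (0,1,0) F (η,x,t)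
          + (w η x t)^2 * Dv (1,0,0) (Dv (1,0,0) F) (η,x,t)) = fun _ => (0:ℝ) :=
        funext fun x => hE η x t
      rw [hfun]; exact hasDerivAt_const ξ 0
    exact hu.unique hz
  -- PDE differentiated in the η direction
  have hE1 : ∀ η ξ t : ℝ,
      -(Dv (1,0,0) (Dv (0,0,1) F) (η,ξ,t))
        - (1 * Dv (0,1,0) F (η,ξ,t) + η * Dv (1,0,0) (Dv (0,1,0) F) (η,ξ,t))
        + (2 * w η ξ t * Dv (1,0,0) F (η,ξ,t) * Dv (1,0,0) (Dv (1,0,0) F) (η,ξ,t)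
          + (w η ξ t)^2 * Dv (1,0,0) (Dv (1,0,0) (Dv (1,0,0) F)) (η,ξ,t)) = 0 := by
    intro η ξ t
    have hu : HasDerivAt
        (fun e => -(Dv (0,0,1) F (e,ξ,t)) - e * Dv (0,1,0) F (e,ξ,t)
          + (w e ξ t)^2 * Dv (1,0,0) (Dv (1,0,0) F) (e,ξ,t))
        (-(Dv (1,0,0) (Dv (0,0,1) F) (η,ξ,t))
          - (1 * Dv (0,1,0) F (η,ξ,t) + η * Dv (1,0,0) (Dv (0,1,0) F) (η,ξ,t))
          + (2 * w η ξ t * Dv (1,0,0) F (η,ξ,t) * Dv (1,0,0) (Dv (1,0,0) F) (η,ξ,t)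
            + (w η ξ t)^2 * Dv (1,0,0) (Dv (1,0,0) (Dv (1,0,0) F)) (η,ξ,t))) η :=
      (((hasDerivAt_c1 hf3 η ξ t).neg).sub
          ((hasDerivAt_id η).mul (hasDerivAt_c1 hf2 η ξ t))).add
        (((hasDerivAt_c1 hF η ξ t).sq'').mul (hasDerivAt_c1 hf11 η ξ t))
    have hz : HasDerivAt
        (fun e => -(Dv (0,0,1) F (e,ξ,t)) - e * Dv (0,1,0) F (e,ξ,t)
          + (w e ξ t)^2 * Dv (1,0,0) (Dv (1,0,0) F) (e,ξ,t)) 0 η := by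
      have hfun : (fun e => -(Dv (0,0,1) F (e,ξ,t)) - e * Dv (0,1,0) F (e,ξ,t)
          + (w e ξ t)^2 * Dv (1,0,0) (Dv (1,0,0) F) (e,ξ,t)) = fun _ => (0:ℝ) :=
        funext fun e => hE e ξ t
      rw [hfun]; exact hasDerivAt_const η 0
    exact hu.unique hz
  constructor
  · intro η ξ t
    have T1 : deriv (fun s => (Dv (0,1,0) F (η,ξ,s))^2) t
        = 2 * Dv (0,1,0) F (η,ξ,t) * Dv (0,0,1) (Dv (0,1,0) F) (η,ξ,t) :=
      ((hasDerivAt_c3 hf2 η ξ t).sq'').deriv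
    have T2 : deriv (fun x => (Dv (0,1,0) F (η,x,t))^2) ξ
        = 2 * Dv (0,1,0) F (η,ξ,t) * Dv (0,1,0) (Dv (0,1,0) F) (η,ξ,t) :=
      ((hasDerivAt_c2 hf2 η ξ t).sq'').deriv
    have T3 : deriv (deriv (fun e => (Dv (0,1,0) F (e,ξ,t))^2)) η
        = 2 * Dv (1,0,0) (Dv (0,1,0) F) (η,ξ,t) * Dv (1,0,0) (Dv (0,1,0) F) (η,ξ,t)
          + 2 * Dv (0,1,0) F (η,ξ,t)
              * Dv (1,0,0) (Dv (1,0,0) (Dv (0,1,0) F)) (η,ξ,t) := by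
      have hfun2 : deriv (fun e => (Dv (0,1,0) F (e,ξ,t))^2)
          = fun e => 2 * Dv (0,1,0) F (e,ξ,t) * Dv (1,0,0) (Dv (0,1,0) F) (e,ξ,t) :=
        funext fun e => ((hasDerivAt_c1 hf2 e ξ t).sq'').deriv
      rw [hfun2]
      exact (((hasDerivAt_c1 hf2 η ξ t).const_mul 2).mul
        (hasDerivAt_c1 hf12 η ξ t)).deriv
    have T4 : deriv (fun e => Dv (0,1,0) F (e,ξ,t)) η
        = Dv (1,0,0) (Dv (0,1,0) F) (η,ξ,t) := (hasDerivAt_c1 hf2 η ξ t).deriv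
    simp only [Lop, hd2, hd11, hd12]
    rw [T1, T2, T3, T4]
    have cA : Dv (0,0,1) (Dv (0,1,0) F) (η,ξ,t) = Dv (0,1,0) (Dv (0,0,1) F) (η,ξ,t) :=
      Dv_comm hF _ _ _
    have s1 : Dv (1,0,0) (Dv (0,1,0) F) = Dv (0,1,0) (Dv (1,0,0) F) :=
      funext (Dv_comm hF _ _)
    have cB : Dv (1,0,0) (Dv (1,0,0) (Dv (0,1,0) F)) (η,ξ,t)
        = Dv (0,1,0) (Dv (1,0,0) (Dv (1,0,0) F)) (η,ξ,t) := by
      rw [s1]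
      exact Dv_comm hf1 _ _ _
    rw [cA, cB]
    linear_combination 2 * Dv (0,1,0) F (η,ξ,t) * hE2 η ξ t
  · intro η ξ t
    have T1 : deriv (fun s => (Dv (1,0,0) F (η,ξ,s))^2) t
        = 2 * Dv (1,0,0) F (η,ξ,t) * Dv (0,0,1) (Dv (1,0,0) F) (η,ξ,t) :=
      ((hasDerivAt_c3 hf1 η ξ t).sq'').deriv
    have T2 : deriv (fun x => (Dv (1,0,0) F (η,x,t))^2) ξ
        = 2 * Dv (1,0,0) F (η,ξ,t) * Dv (0,1,0) (Dv (1,0,0) F) (η,ξ,t) :=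
      ((hasDerivAt_c2 hf1 η ξ t).sq'').deriv
    have T3 : deriv (deriv (fun e => (Dv (1,0,0) F (e,ξ,t))^2)) η
        = 2 * Dv (1,0,0) (Dv (1,0,0) F) (η,ξ,t) * Dv (1,0,0) (Dv (1,0,0) F) (η,ξ,t)
          + 2 * Dv (1,0,0) F (η,ξ,t)
              * Dv (1,0,0) (Dv (1,0,0) (Dv (1,0,0) F)) (η,ξ,t) := by
      have hfun2 : deriv (fun e => (Dv (1,0,0) F (e,ξ,t))^2)
          = fun e => 2 * Dv (1,0,0) F (e,ξ,t) * Dv (1,0,0) (Dv (1,0,0) F) (e,ξ,t) :=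
        funext fun e => ((hasDerivAt_c1 hf1 e ξ t).sq'').deriv
      rw [hfun2]
      exact (((hasDerivAt_c1 hf1 η ξ t).const_mul 2).mul
        (hasDerivAt_c1 hf11 η ξ t)).deriv
    simp only [Lop, hd1, hd2, hd11]
    rw [T1, T2, T3]
    have cA : Dv (0,0,1) (Dv (1,0,0) F) (η,ξ,t) = Dv (1,0,0) (Dv (0,0,1) F) (η,ξ,t) :=
      Dv_comm hF _ _ _
    have cB : Dv (0,1,0) (Dv (1,0,0) F) (η,ξ,t) = Dv (1,0,0) (Dv (0,1,0) F) (η,ξ,t) :=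
      Dv_comm hF _ _ _
    rw [cA, cB]
    linear_combination 2 * Dv (1,0,0) F (η,ξ,t) * hE1 η ξ t
end
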